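/- arXiv:2107.09758 — 9 statements merged into one kernel-verified Lean document; each statement's English description precedes it below -/
import Mathlib

section
/- If X is an r-regular graph on n vertices that admits an efficient (j,k)-dominating function, then r+1 divides n·k. -/
open SimpleGraph Finset Matrix Polynomial

/-- `f` is an efficient `(j,k)`-dominating function on `G`:
it takes values in `{0,…,j}` and sums to `k` over every closed neighbourhood. -/
def EffDom {V : Type*} [Fintype V] (G : SimpleGraph V) [DecidableRel G.Adj]
    (j k : ℕ) (f : V → ℕ) : Prop :=
  (∀ v, f v ≤ j) ∧ ∀ v : V, f v + ∑ u ∈ G.neighborFinset v, f u = k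

theorem stmt0 {V : Type*} [Fintype V] (G : SimpleGraph V) [DecidableRel G.Adj]
    (r j k : ℕ) (hreg : G.IsRegularOfDegree r) (f : V → ℕ) (hf : EffDom G j k f) :
    (r + 1) ∣ Fintype.card V * k := by
  classical
  have swap : ∑ v : V, ∑ u ∈ G.neighborFinset v, f u
      = ∑ u : V, ∑ v ∈ G.neighborFinset u, f u := by
    apply Finset.sum_comm'
    intro u v
    simp [SimpleGraph.mem_neighborFinset, SimpleGraph.adj_comm]
  have inner : ∀ u : V, ∑ v ∈ G.neighborFinset u, f u = r * f u := by
    intro u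
    rw [Finset.sum_const, smul_eq_mul]
    congr 1
    exact hreg u
  have key : Fintype.card V * k = (r + 1) * ∑ v : V, f v := by
    calc Fintype.card V * k = ∑ _v : V, k := by
          rw [Finset.sum_const, smul_eq_mul, Finset.card_univ]
      _ = ∑ v : V, (f v + ∑ u ∈ G.neighborFinset v, f u) := by
          exact Finset.sum_congr rfl fun v _ => (hf.2 v).symm
      _ = ∑ v : V, f v + ∑ v : V, ∑ u ∈ G.neighborFinset v, f u := Finset.sum_add_distrib
      _ = ∑ v : V, f v + ∑ u : V, r * f u := by rw [swap]; simp [inner]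
      _ = ∑ v : V, (r + 1) * f v := by
          rw [← Finset.sum_add_distrib]; exact Finset.sum_congr rfl fun v _ => by ring
      _ = (r + 1) * ∑ v : V, f v := (Finset.mul_sum _ _ _).symm
  exact ⟨_, key⟩
end

section
/- For an r-regular graph X and 1 ≤ k ≤ r, X has an efficient (1,k)-dominating function if and only if there exists a set S ⊆ V(X) such that the induced subgraph X[S] is (k-1)-regular and the induced subgraph on the complement of S is (r-k)-regular. -/
open SimpleGraph Finset Matrix Polynomial

theorem stmt2 {V : Type*} [Fintype V] [DecidableEq V] (G : SimpleGraph V) [DecidableRel G.Adj]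
    (r k : ℕ) (hreg : G.IsRegularOfDegree r) (hk1 : 1 ≤ k) (hkr : k ≤ r) :
    (∃ f : V → ℕ, EffDom G 1 k f) ↔
      ∃ S : Finset V,
        (∀ v ∈ S, ((G.neighborFinset v) ∩ S).card = k - 1) ∧
        (∀ v ∉ S, ((G.neighborFinset v) \ S).card = r - k) := by
  have key : ∀ (S : Finset V) (v : V),
      (∑ u ∈ G.neighborFinset v, if u ∈ S then 1 else 0) =
        ((G.neighborFinset v) ∩ S).card := by
    intro S v
    rw [Finset.sum_boole]
    norm_cast
  constructor
  · rintro ⟨f, hf1, hf2⟩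
    refine ⟨Finset.univ.filter (fun v => f v = 1), ?_, ?_⟩
    · intro v hv
      simp only [Finset.mem_filter] at hv
      have h := hf2 v
      rw [hv.2] at h
      have hsum : (∑ u ∈ G.neighborFinset v, f u) = k - 1 := by omega
      rw [← key]
      rw [← hsum]
      apply Finset.sum_congr rfl
      intro u _
      have := hf1 u
      by_cases h1 : f u = 1 <;> simp [h1] <;> omega
    · intro v hv
      simp only [Finset.mem_filter, Finset.mem_univ, true_and] at hv
      have hv0 : f v = 0 := by have := hf1 v; omega
      have h := hf2 v
      rw [hv0, zero_add] at h
      have hsum : (∑ u ∈ G.neighborFinset v, if u ∈ Finset.univ.filter (fun v => f v = 1) then 1 else 0) = k := by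
        rw [← h]
        apply Finset.sum_congr rfl
        intro u _
        have := hf1 u
        by_cases h1 : f u = 1 <;> simp [h1] <;> omega
      rw [key] at hsum
      have hcard := Finset.card_sdiff_add_card_inter (G.neighborFinset v)
        (Finset.univ.filter (fun v => f v = 1))
      rw [hsum] at hcard
      rw [G.card_neighborFinset_eq_degree, hreg v] at hcard
      omega
  · rintro ⟨S, hS1, hS2⟩
    refine ⟨fun v => if v ∈ S then 1 else 0, fun v => by beta_reduce; split <;> omega, fun v => ?_⟩
    beta_reduce
    rw [key]
    by_cases hv : v ∈ S
    · rw [if_pos hv, hS1 v hv]; omega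
    · rw [if_neg hv]
      have hcard := Finset.card_sdiff_add_card_inter (G.neighborFinset v) S
      rw [hS2 v hv, G.card_neighborFinset_eq_degree, hreg v] at hcard
      omega
end

section
/- If f is an efficient (1,k)-dominating function on an r-regular graph X with 1 ≤ k ≤ r, and S = {v : f(v) = 1}, then the partition {S, V(X)\S} is an equitable partition of X with characteristic matrix [[k-1, r-k+1],[k, r-k]]. -/
open SimpleGraph Finset Matrix Polynomial

theorem stmt4 {V : Type*} [Fintype V] [DecidableEq V] (G : SimpleGraph V) [DecidableRel G.Adj]
    (r k : ℕ) (hreg : G.IsRegularOfDegree r) (hk1 : 1 ≤ k) (hkr : k ≤ r)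
    (f : V → ℕ) (hf : EffDom G 1 k f) (S : Finset V)
    (hS : S = Finset.univ.filter (fun v => f v = 1)) :
    (∀ v ∈ S, ((G.neighborFinset v) ∩ S).card = k - 1 ∧
        ((G.neighborFinset v) \ S).card = r - k + 1) ∧
    (∀ v ∉ S, ((G.neighborFinset v) ∩ S).card = k ∧
        ((G.neighborFinset v) \ S).card = r - k) := by
  obtain ⟨hb, hs⟩ := hf
  have hmem : ∀ u, u ∈ S ↔ f u = 1 := by
    intro u; subst hS; simp
  have hfval : ∀ u, f u = if u ∈ S then 1 else 0 := by
    intro u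
    by_cases h : u ∈ S
    · simp [h, (hmem u).1 h]
    · have h2 := hb u
      have h3 : f u = 0 ∨ f u = 1 := by omega
      rcases h3 with h0 | h1
      · simp [h, h0]
      · exact absurd ((hmem u).2 h1) h
  have hsum : ∀ v, ∑ u ∈ G.neighborFinset v, f u =
      ((G.neighborFinset v) ∩ S).card := by
    intro v
    have : ∑ u ∈ G.neighborFinset v, f u =
        ∑ u ∈ G.neighborFinset v, (if u ∈ S then 1 else 0) := by
      exact Finset.sum_congr rfl fun u _ => hfval u
    rw [this, Finset.sum_boole, Finset.filter_mem_eq_inter]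
    simp
  have hsd : ∀ v, ((G.neighborFinset v) \ S).card + ((G.neighborFinset v) ∩ S).card = r := by
    intro v
    rw [Finset.card_sdiff_add_card_inter]
    exact hreg v
  constructor
  · intro v hv
    have h1 := hs v
    rw [hsum v, (hmem v).1 hv] at h1
    have := hsd v
    omega
  · intro v hv
    have h1 := hs v
    have hf0 : f v = 0 := by
      have := hb v
      have h3 : f v = 0 ∨ f v = 1 := by omega
      rcases h3 with h0 | hone
      · exact h0
      · exact absurd ((hmem v).2 hone) hv
    rw [hsum v, hf0] at h1
    have := hsd v
    omega
end

section
/- A connected r-regular graph X has a non-trivial efficient (j,k)-dominating function (one not constant on V(X)) for some j, k if and only if -1 is an eigenvalue of the adjacency matrix of X. -/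
open SimpleGraph Finset Matrix Polynomial

/-!
Write `f(N[v])` for the sum of `f` over the closed neighbourhood of `v`, so that `A x = -x` says
exactly `x(N[v]) = 0` for all `v`. In an `r`-regular graph adding a constant `c` adds `(r + 1) c`
to every `f(N[v])`. Hence an efficient `(j,k)`-dominating function `f` gives the eigenvector
`f - k / (r + 1)`, which vanishes only if `f` is constant. Conversely, a rational eigenvector
scaled to an integer vector and then shifted by a large enough integer is a non-constant efficient
dominating function.
-/

namespace SimpleGraph

variable {V : Type*} [Fintype V] (G : SimpleGraph V) [DecidableRel G.Adj]

def closedNbhdSum {R : Type*} [AddCommMonoid R] (x : V → R) (v : V) : R :=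
  x v + ∑ u ∈ G.neighborFinset v, x u

variable {G}

theorem adjMatrix_mulVec_eq_neg_one_smul_iff {R : Type*} [Ring R] (x : V → R) :
    G.adjMatrix R *ᵥ x = (-1 : R) • x ↔ ∀ v, G.closedNbhdSum x v = 0 := by
  simp only [funext_iff, adjMatrix_mulVec_apply, neg_one_smul, Pi.neg_apply,
    closedNbhdSum]
  exact forall_congr' fun v => by rw [add_comm, eq_neg_iff_add_eq_zero]

namespace IsRegularOfDegree

variable {r : ℕ}

theorem closedNbhdSum_add_const (hreg : G.IsRegularOfDegree r)
    {R : Type*} [CommSemiring R] (x : V → R) (c : R) (v : V) :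
    G.closedNbhdSum (fun u => x u + c) v = G.closedNbhdSum x v + (r + 1) * c := by
  rw [closedNbhdSum, closedNbhdSum, sum_add_distrib, sum_const, card_neighborFinset_eq_degree,
    hreg v, nsmul_eq_mul]
  ring

theorem eq_zero_of_closedNbhdSum_eq_zero (hreg : G.IsRegularOfDegree r)
    {R : Type*} [CommRing R] [NoZeroDivisors R] [CharZero R]
    {x : V → R} (hx : ∀ v, G.closedNbhdSum x v = 0) (c : R) (hc : ∀ v, x v = c) : x = 0 := by
  funext v
  have h := hx v
  simp only [closedNbhdSum, hc, sum_const, card_neighborFinset_eq_degree, hreg v,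
    nsmul_eq_mul] at h
  rw [hc, Pi.zero_apply]
  exact (mul_eq_zero.mp (by linear_combination h : ((r : R) + 1) * c = 0)).resolve_left
    (Nat.cast_add_one_ne_zero r)

theorem exists_closedNbhdSum_eq_zero_of_effDom (hreg : G.IsRegularOfDegree r)
    {j k : ℕ} {f : V → ℕ} (hf : EffDom G j k f) (hnc : ¬ ∃ c, ∀ v, f v = c) :
    ∃ x : V → ℚ, x ≠ 0 ∧ ∀ v, G.closedNbhdSum x v = 0 := by
  obtain ⟨v, w, hvw⟩ : ∃ v w, f v ≠ f w := by
    push Not at hnc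
    obtain ⟨v, -⟩ := hnc 0
    obtain ⟨w, hw⟩ := hnc (f v)
    exact ⟨v, w, hw.symm⟩
  refine ⟨fun u => (f u : ℚ) + -(k / (r + 1)), fun h => hvw ?_, fun u => ?_⟩
  · have hv := congrFun h v
    have hw := congrFun h w
    simp only [Pi.zero_apply] at hv hw
    exact_mod_cast (by linarith : (f v : ℚ) = f w)
  · have hfu : G.closedNbhdSum (fun u => (f u : ℚ)) u = k := by
      simp only [closedNbhdSum]
      exact_mod_cast hf.2 u
    rw [hreg.closedNbhdSum_add_const, hfu]
    field_simp
    ring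

theorem exists_effDom_of_closedNbhdSum_eq_zero (hreg : G.IsRegularOfDegree r)
    {z : V → ℤ} (hz0 : z ≠ 0) (hz : ∀ v, G.closedNbhdSum z v = 0) :
    ∃ (j k : ℕ) (f : V → ℕ), EffDom G j k f ∧ ¬ ∃ c : ℕ, ∀ v, f v = c := by
  set m : ℕ := ∑ v, (z v).natAbs
  have hm (v : V) : 0 ≤ z v + m := by
    have : (z v).natAbs ≤ m :=
      single_le_sum (f := fun u => (z u).natAbs) (fun u _ => Nat.zero_le _) (mem_univ v)
    omega
  set f : V → ℕ := fun v => (z v + m).toNat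
  have hf (v : V) : (f v : ℤ) = z v + m := Int.toNat_of_nonneg (hm v)
  refine ⟨univ.sup f, (r + 1) * m, f, ⟨fun v => le_sup (mem_univ v), fun v => ?_⟩, ?_⟩
  · have h : G.closedNbhdSum (fun u => (f u : ℤ)) v = (r + 1) * m := by
      simp only [hf, hreg.closedNbhdSum_add_const, hz, zero_add]
    simp only [closedNbhdSum] at h
    exact_mod_cast h
  · rintro ⟨c, hc⟩
    refine hz0 (hreg.eq_zero_of_closedNbhdSum_eq_zero hz (c - m) fun v => ?_)
    have := hf v
    rw [hc] at this
    omega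

end IsRegularOfDegree

theorem exists_pos_nat_mul_eq_intCast {ι : Type*} [Fintype ι] (x : ι → ℚ) :
    ∃ t : ℕ, 0 < t ∧ ∃ z : ι → ℤ, ∀ i, (z i : ℚ) = t * x i := by
  refine ⟨∏ i, (x i).den, prod_pos fun i _ => (x i).pos,
    fun i => (x i).num * ((∏ i, (x i).den) / (x i).den : ℕ), fun i => ?_⟩
  have hdvd : (x i).den ∣ ∏ i, (x i).den := dvd_prod_of_mem _ (mem_univ i)
  have ht : ((∏ i, (x i).den : ℕ) : ℚ) = ((∏ i, (x i).den) / (x i).den : ℕ) * (x i).den :=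
    mod_cast (Nat.div_mul_cancel hdvd).symm
  rw [ht, mul_assoc, Rat.den_mul_eq_num, Int.cast_mul, Int.cast_natCast, mul_comm]

theorem exists_int_closedNbhdSum_eq_zero {x : V → ℚ} (hx0 : x ≠ 0)
    (hx : ∀ v, G.closedNbhdSum x v = 0) :
    ∃ z : V → ℤ, z ≠ 0 ∧ ∀ v, G.closedNbhdSum z v = 0 := by
  obtain ⟨t, ht, z, hz⟩ := exists_pos_nat_mul_eq_intCast x
  have ht' : (t : ℚ) ≠ 0 := by exact_mod_cast ht.ne'
  refine ⟨z, ?_, fun v => ?_⟩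
  · rintro rfl
    refine hx0 (funext fun v => ?_)
    simpa [ht'] using (hz v).symm
  · have h : G.closedNbhdSum (fun u => (z u : ℚ)) v = t * G.closedNbhdSum x v := by
      simp only [closedNbhdSum, hz, mul_add, mul_sum]
    rw [hx, mul_zero] at h
    simp only [closedNbhdSum] at h
    exact_mod_cast h

end SimpleGraph

theorem stmt7_general {V : Type*} [Fintype V] (G : SimpleGraph V) [DecidableRel G.Adj]
    (r : ℕ) (hreg : G.IsRegularOfDegree r) :
    (∃ (j k : ℕ) (f : V → ℕ), EffDom G j k f ∧ ¬ ∃ c : ℕ, ∀ v, f v = c) ↔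
      (∃ x : V → ℚ, x ≠ 0 ∧ G.adjMatrix ℚ *ᵥ x = (-1 : ℚ) • x) := by
  simp only [adjMatrix_mulVec_eq_neg_one_smul_iff]
  constructor
  · rintro ⟨j, k, f, hf, hnc⟩
    exact hreg.exists_closedNbhdSum_eq_zero_of_effDom hf hnc
  · rintro ⟨x, hx0, hx⟩
    obtain ⟨z, hz0, hz⟩ := exists_int_closedNbhdSum_eq_zero hx0 hx
    exact hreg.exists_effDom_of_closedNbhdSum_eq_zero hz0 hz

theorem stmt7 {V : Type*} [Fintype V] (G : SimpleGraph V) [DecidableRel G.Adj]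
    (r : ℕ) (hreg : G.IsRegularOfDegree r) (hconn : G.Connected) :
    (∃ (j k : ℕ) (f : V → ℕ), EffDom G j k f ∧ ¬ ∃ c : ℕ, ∀ v, f v = c) ↔
      (∃ x : V → ℚ, x ≠ 0 ∧ G.adjMatrix ℚ *ᵥ x = (-1 : ℚ) • x) :=
  stmt7_general G r hreg
end

section
/- If π is a dominatable partition of a graph X with cells C₁,...,Cₛ and constants a₁,...,aₛ, and α₁,...,αₛ ∈ {0,...,j} are arbitrary, then the function f assigning αₗ to each vertex of Cₗ is an efficient (j,k)-dominating function with k = Σₗ αₗ·aₗ. -/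
open SimpleGraph Finset Matrix Polynomial

/-- `c` (cell assignment) together with constants `a` forms a dominatable partition of `G`:
every vertex of cell `l` has `a l - 1` neighbours in its own cell,
and every vertex outside cell `l` has `a l` neighbours in cell `l`. -/
def IsDominatable {V : Type*} [Fintype V] (G : SimpleGraph V) [DecidableRel G.Adj]
    {s : ℕ} (c : V → Fin s) (a : Fin s → ℕ) : Prop :=
  (∀ v : V, ((G.neighborFinset v).filter (fun u => c u = c v)).card + 1 = a (c v)) ∧
  (∀ (v : V) (l : Fin s), l ≠ c v → ((G.neighborFinset v).filter (fun u => c u = l)).card = a l)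

theorem stmt9 {V : Type*} [Fintype V] (G : SimpleGraph V) [DecidableRel G.Adj]
    {s : ℕ} (c : V → Fin s) (a : Fin s → ℕ) (h : IsDominatable G c a)
    (j : ℕ) (α : Fin s → ℕ) (hα : ∀ l, α l ≤ j) :
    EffDom G j (∑ l, α l * a l) (fun v => α (c v)) := by
  obtain ⟨h1, h2⟩ := h
  refine ⟨fun v => hα _, fun v => ?_⟩
  have hsum : ∑ u ∈ G.neighborFinset v, α (c u)
      = ∑ l : Fin s, α l * ((G.neighborFinset v).filter (fun u => c u = l)).card := by
    rw [← Finset.sum_fiberwise (G.neighborFinset v) c (fun u => α (c u))]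
    refine Finset.sum_congr rfl fun l _ => ?_
    rw [Finset.sum_congr rfl (fun u hu => by
      rw [(Finset.mem_filter.mp hu).2]), Finset.sum_const, smul_eq_mul, mul_comm]
  rw [hsum, ← Finset.add_sum_erase _ _ (Finset.mem_univ (c v)),
      ← Finset.add_sum_erase _ (fun l => α l * a l) (Finset.mem_univ (c v)),
      ← add_assoc]
  congr 1
  · rw [← h1 v, Nat.mul_add, mul_one, add_comm]
  · exact Finset.sum_congr rfl fun l hl => by
      rw [h2 v l (Finset.ne_of_mem_erase hl)]
end

section
/- Let π be an equitable partition of an r-regular graph X with s cells whose characteristic matrix A_π has eigenvalue -1 with multiplicity s-1. Then π is a dominatable partition, i.e., A_π + Iₛ is an outer product 1⃗·[a₁,...,aₛ] for some values a₁,...,aₛ. -/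
/-!
Counting the edges between two cells gives `|Cᵢ| b_ij = |Cⱼ| b_ji`, so `A_π` is self-adjoint for
the positive definite form `∑ |Cᵢ| xᵢ yᵢ` over `ℚ`. Hence `A_π + I` has no nilpotent part: its
kernel has dimension equal to the algebraic multiplicity `s - 1` of `-1`, and its range is at most
one-dimensional. That range contains the all-ones vector (every row sum is `r + 1 ≠ 0`), so every
column of `A_π + I` is constant, i.e. all its rows are equal.
-/

open SimpleGraph Finset Matrix Polynomial

namespace Matrix

variable {K n : Type*} [Field K] [Fintype n] [DecidableEq n]

section PositiveDiagonalSymmetrizable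

variable [LinearOrder K] [IsStrictOrderedRing K] {w : n → K} {A : Matrix n n K}

theorem mulVec_eq_zero_of_mulVec_mulVec_eq_zero (hw : ∀ i, 0 < w i)
    (hA : (diagonal w * A).IsSymm) {x : n → K} (hx : A *ᵥ (A *ᵥ x) = 0) : A *ᵥ x = 0 := by
  set y := A *ᵥ x
  -- `A` is self-adjoint for the positive definite form `⟨u, v⟩ = ∑ wᵢ uᵢ vᵢ`, so `⟨y, y⟩ = ⟨x, A y⟩`.
  have hsq : ∑ i, w i * (y i * y i) = 0 :=
    calc ∑ i, w i * (y i * y i) = y ⬝ᵥ ((diagonal w * A) *ᵥ x) := by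
          simp only [← mulVec_mulVec, mulVec_diagonal, dotProduct]
          exact Finset.sum_congr rfl fun i _ => by ring
      _ = x ⬝ᵥ ((diagonal w * A) *ᵥ y) := by
          rw [dotProduct_mulVec, ← mulVec_transpose, hA.eq, dotProduct_comm]
      _ = 0 := by rw [← mulVec_mulVec, hx, mulVec_zero, dotProduct_zero]
  funext i
  have hterm := (Finset.sum_eq_zero_iff_of_nonneg fun j _ =>
    mul_nonneg (hw j).le (mul_self_nonneg (y j))).mp hsq i (mem_univ i)
  simpa [(hw i).ne'] using hterm

theorem finrank_eigenspace_toLin'_eq_rootMultiplicity (hw : ∀ i, 0 < w i)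
    (hA : (diagonal w * A).IsSymm) (μ : K) :
    Module.finrank K (Module.End.eigenspace (toLin' A) μ) = A.charpoly.rootMultiplicity μ := by
  set g := toLin' A - μ • 1 with hg
  have hgA : ∀ x, g x = (A - μ • 1) *ᵥ x := fun x => by
    simp [hg, sub_mulVec, smul_mulVec]
  have hsymm : (diagonal w * (A - μ • 1)).IsSymm := by
    rw [mul_sub, Matrix.mul_smul, mul_one]
    exact hA.sub ((isSymm_diagonal w).smul μ)
  have hker : LinearMap.ker (g ^ 1) = LinearMap.ker (g ^ (1 : ℕ).succ) := by
    refine le_antisymm (LinearMap.ker_le_ker_comp _ _) fun x hx => ?_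
    simp only [LinearMap.mem_ker, pow_one, pow_two, Module.End.mul_apply, hgA] at hx ⊢
    exact mulVec_eq_zero_of_mulVec_mulVec_eq_zero hw hsymm hx
  have hmax : Module.End.maxGenEigenspace (toLin' A) μ = Module.End.eigenspace (toLin' A) μ := by
    refine le_antisymm (fun x hx => ?_) (Module.End.genEigenspace_le_maximal _ μ 1)
    obtain ⟨k, hk⟩ := (Module.End.mem_maxGenEigenspace _ μ x).mp hx
    rw [Module.End.eigenspace_def, ← pow_one (toLin' A - μ • 1), ← hg,
      Module.End.ker_pow_constant hker k, LinearMap.mem_ker, add_comm, pow_succ',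
      Module.End.mul_apply, hk, map_zero]
  rw [← hmax, LinearMap.finrank_maxGenEigenspace_eq, charpoly_toLin']

end PositiveDiagonalSymmetrizable

theorem exists_eq_replicateRow_of_finrank_range_le_one {A : Matrix n n K} {c : K} (hc : c ≠ 0)
    (hA : A *ᵥ 1 = c • 1) (hrank : Module.finrank K (LinearMap.range (toLin' A)) ≤ 1) :
    ∃ a : n → K, A = replicateRow n a := by
  cases isEmpty_or_nonempty n
  · exact ⟨0, Subsingleton.elim _ _⟩
  have hone : (1 : n → K) ∈ LinearMap.range (toLin' A) :=
    ⟨c⁻¹ • 1, by rw [toLin'_apply, mulVec_smul, hA, smul_smul, inv_mul_cancel₀ hc, one_smul]⟩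
  have hrange : LinearMap.range (toLin' A) = Submodule.span K {1} :=
    (Submodule.eq_of_le_of_finrank_le (Submodule.span_singleton_le_iff_mem _ _ |>.mpr hone)
      (by rwa [finrank_span_singleton one_ne_zero])).symm
  have hcol : ∀ j, ∃ a : K, a • (1 : n → K) = A *ᵥ Pi.single j 1 := fun j =>
    Submodule.mem_span_singleton.mp (hrange ▸ LinearMap.mem_range_self (toLin' A) (Pi.single j 1))
  choose a ha using hcol
  exact ⟨a, ext fun i j => by simpa using (congrFun (ha j) i).symm⟩

end Matrix

section EquitablePartition

variable {V ι : Type*} [Fintype V] [DecidableEq ι] {G : SimpleGraph V}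
  [DecidableRel G.Adj] {c : V → ι} {B : Matrix ι ι ℕ}

theorem sum_quotient_row_eq_degree [Fintype ι]
    (hequit : ∀ v l, ((G.neighborFinset v).filter (fun u => c u = l)).card = B (c v) l) (v : V) :
    ∑ l, B (c v) l = G.degree v := by
  rw [← card_neighborFinset_eq_degree,
    card_eq_sum_card_fiberwise (f := c) (t := univ) fun _ _ => mem_univ _]
  exact Finset.sum_congr rfl fun l _ => (hequit v l).symm

theorem card_cell_mul_quotient_comm
    (hequit : ∀ v l, ((G.neighborFinset v).filter (fun u => c u = l)).card = B (c v) l)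
    (i j : ι) :
    (univ.filter (c · = i)).card * B i j = (univ.filter (c · = j)).card * B j i := by
  have hcount : ∀ i j, (univ.filter (c · = i)).card * B i j =
      ∑ v ∈ univ.filter (c · = i), ∑ u ∈ univ.filter (c · = j), if G.Adj v u then 1 else 0 := by
    intro i j
    rw [card_eq_sum_ones, sum_mul]
    refine Finset.sum_congr rfl fun v hv => ?_
    rw [one_mul, ← (mem_filter.mp hv).2, ← hequit, ← card_filter]
    congr 1
    ext u
    simp [and_comm]
  rw [hcount, hcount, Finset.sum_comm]
  simp only [G.adj_comm]

end EquitablePartition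

theorem stmt13 {V : Type*} [Fintype V] (G : SimpleGraph V) [DecidableRel G.Adj]
    (r : ℕ) (hreg : G.IsRegularOfDegree r)
    {s : ℕ} (c : V → Fin s) (hc : Function.Surjective c)
    (B : Matrix (Fin s) (Fin s) ℕ)
    (hequit : ∀ (v : V) (l : Fin s),
      ((G.neighborFinset v).filter (fun u => c u = l)).card = B (c v) l)
    (heig : ((B.map (Nat.cast : ℕ → ℚ)).charpoly).rootMultiplicity (-1) = s - 1) :
    ∃ a : Fin s → ℚ,
      B.map (Nat.cast : ℕ → ℚ) + 1 = Matrix.of (fun _ l => a l) := by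
  set A := B.map (Nat.cast : ℕ → ℚ)
  set w : Fin s → ℚ := fun i => ((univ.filter (c · = i)).card : ℚ)
  have hw : ∀ i, 0 < w i := fun i => by
    obtain ⟨v, hv⟩ := hc i
    exact Nat.cast_pos.mpr (card_pos.mpr ⟨v, mem_filter.mpr ⟨mem_univ v, hv⟩⟩)
  have hsymm : (diagonal w * A).IsSymm := by
    ext i j
    simp only [transpose_apply, diagonal_mul, A, w, map_apply]
    exact_mod_cast (card_cell_mul_quotient_comm hequit i j).symm
  have hker : Module.finrank ℚ (LinearMap.ker (toLin' (A + 1))) = s - 1 := by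
    have hshift : toLin' (A + 1) = toLin' A - (-1 : ℚ) • 1 := by
      rw [map_add, toLin'_one]
      module
    rw [hshift, ← Module.End.eigenspace_def,
      finrank_eigenspace_toLin'_eq_rootMultiplicity hw hsymm, heig]
  have hrange : Module.finrank ℚ (LinearMap.range (toLin' (A + 1))) ≤ 1 := by
    have := (toLin' (A + 1)).finrank_range_add_finrank_ker
    rw [hker, Module.finrank_fin_fun] at this
    omega
  have hrows : (A + 1) *ᵥ 1 = ((r : ℚ) + 1) • 1 := by
    funext i
    obtain ⟨v, rfl⟩ := hc i
    rw [add_mulVec, one_mulVec, ← hreg v, ← sum_quotient_row_eq_degree hequit v]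
    simp [mulVec, dotProduct, A]
  exact exists_eq_replicateRow_of_finrank_range_le_one (by positivity) hrows hrange
end

section
/- If X is a cover of the complete graph K_m, then the partition of V(X) given by the fibres is a dominatable partition, and assigning value 1 to one fibre and 0 to all others yields an efficient (1,1)-dominating function on X. -/
open SimpleGraph Finset Matrix Polynomial

/-- `F : VX → VY` exhibits `X` as a cover (covering map) of `Y`: fibres partition `V(X)`,
edges of `X` project to edges of `Y` (so fibres are independent and there are no edges
between fibres of non-adjacent vertices), and for adjacent `a b` in `Y` the edges between
the fibres of `a` and `b` form a perfect matching. -/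
def IsCover {VX VY : Type*} (X : SimpleGraph VX) (Y : SimpleGraph VY) (F : VX → VY) : Prop :=
  Function.Surjective F ∧
  (∀ u w, X.Adj u w → Y.Adj (F u) (F w)) ∧
  (∀ a b, Y.Adj a b → ∀ u, F u = a → ∃! w, F w = b ∧ X.Adj u w)

theorem stmt15 {VX : Type*} [Fintype VX] {m : ℕ}
    (X : SimpleGraph VX) [DecidableRel X.Adj] (F : VX → Fin m)
    (h : IsCover X (⊤ : SimpleGraph (Fin m)) F) :
    IsDominatable X F (fun _ => 1) ∧
    ∀ v₀ : Fin m, EffDom X 1 1 (fun u => if F u = v₀ then 1 else 0) := by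
  obtain ⟨hsurj, hproj, hmatch⟩ := h
  have hsame : ∀ v : VX, ((X.neighborFinset v).filter (fun u => F u = F v)) = ∅ := by
    intro v
    apply Finset.filter_false_of_mem
    intro u hu
    have := hproj v u (by simpa using hu)
    simp only [SimpleGraph.top_adj] at this
    exact fun he => this he.symm
  have hdiff : ∀ (v : VX) (l : Fin m), l ≠ F v →
      ((X.neighborFinset v).filter (fun u => F u = l)).card = 1 := by
    intro v l hl
    obtain ⟨w, ⟨hwF, hwA⟩, huniq⟩ := hmatch (F v) l (by simpa using hl.symm) v rfl
    rw [Finset.card_eq_one]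
    refine ⟨w, ?_⟩
    ext u
    simp only [Finset.mem_filter, SimpleGraph.mem_neighborFinset, Finset.mem_singleton]
    constructor
    · rintro ⟨ha, hf⟩; exact huniq u ⟨hf, ha⟩
    · rintro rfl; exact ⟨hwA, hwF⟩
  constructor
  · constructor
    · intro v; rw [hsame v]; simp
    · intro v l hl; exact hdiff v l hl
  · intro v₀
    refine ⟨fun v => by simp only []; split <;> simp, fun v => ?_⟩
    have : ∑ u ∈ X.neighborFinset v, (if F u = v₀ then 1 else 0) =
        ((X.neighborFinset v).filter (fun u => F u = v₀)).card :=
      (Finset.card_filter _ _).symm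
    rw [this]
    by_cases hv : F v = v₀
    · subst hv
      rw [hsame v]
      simp
    · rw [hdiff v v₀ (fun he => hv he.symm)]
      simp [hv]
end

section
/- Let q be a prime power and suppose (q-1)d + 1 = q^a·m with m not divisible by q and a ≥ 1. Then the Hamming graph H(q,d) has an efficient (1,k)-dominating function for every 1 ≤ k ≤ (q-1)d+1 that is a multiple of m. -/
open SimpleGraph Finset Matrix Polynomial

/-- The Hamming graph `H(q,d)`: vertices are the words of length `d` over an alphabet
of size `q`, adjacent iff at Hamming distance `1`. -/
def hammingGraph (q d : ℕ) : SimpleGraph (Fin d → Fin q) where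
  Adj x y := hammingDist x y = 1
  symm := ⟨by intro x y h; rwa [hammingDist_comm]⟩
  loopless := ⟨by intro x h; simp [hammingDist_self] at h⟩

instance (q d : ℕ) : DecidableRel (hammingGraph q d).Adj :=
  fun _ _ => Nat.decEq _ _

/-!
Identify the alphabet with `𝔽_q` and let `W` be an `𝔽_q`-space with `|W| = q^a`. Writing
`N = (q^a - 1)/(q - 1)` for the number of points of `ℙ(W)`, the hypothesis forces
`m = r(q - 1) + 1` and `d = mN + r` for some `r`. Take the `d` columns `w_i` of a check matrix to
be every point of `ℙ(W)` repeated `m` times together with `r` zero columns, and let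
`s(x) = ∑ x_i w_i`. Moving from `x` to a neighbour adds `t • w_i` (`t ≠ 0`) to `s(x)`, so among
the closed-neighbourhood steps each nonzero vector of `W` is added exactly `m` times, and `0`
exactly `1 + r(q - 1) = m` times. Hence for every `φ : W → ℕ` the closed-neighbourhood sums of
`φ ∘ s` all equal `m ∑ φ`; take `φ` the indicator of a subset of `W` of size `k / m ≤ q^a`.
-/

open Function

section HammingGraph

variable {q d : ℕ}

lemma hammingGraph_adj_iff {x y : Fin d → Fin q} :
    (hammingGraph q d).Adj x y ↔ ∃ i, ∃ c ≠ x i, y = update x i c := by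
  change hammingDist x y = 1 ↔ _
  rw [hammingDist, Finset.card_eq_one]
  constructor
  · rintro ⟨i, hi⟩
    have hdiff : ∀ j, x j ≠ y j ↔ j = i := fun j => by
      simpa using Finset.ext_iff.1 hi j
    refine ⟨i, y i, Ne.symm ((hdiff i).2 rfl), funext fun j => ?_⟩
    rcases eq_or_ne j i with rfl | hj
    · simp
    · rw [update_of_ne hj]
      exact (not_not.1 (mt (hdiff j).1 hj)).symm
  · rintro ⟨i, c, hc, rfl⟩
    refine ⟨i, Finset.ext fun j => ?_⟩
    rcases eq_or_ne j i with rfl | hj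
    · simp [hc.symm]
    · simp [hj]

lemma sum_neighborFinset_hammingGraph {M : Type*} [AddCommMonoid M]
    (x : Fin d → Fin q) (f : (Fin d → Fin q) → M) :
    ∑ y ∈ (hammingGraph q d).neighborFinset x, f y
      = ∑ i, ∑ c ∈ Finset.univ.erase (x i), f (update x i c) := by
  have hN : (hammingGraph q d).neighborFinset x
      = Finset.univ.biUnion fun i => (Finset.univ.erase (x i)).image (update x i) := by
    ext y
    simp [hammingGraph_adj_iff, eq_comm]
  rw [hN, Finset.sum_biUnion]
  · exact Finset.sum_congr rfl fun i _ =>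
      Finset.sum_image fun _ _ _ _ h => update_injective x i h
  · intro i _ i' _ hii'
    simp only [Function.onFun, Finset.disjoint_left, Finset.mem_image, Finset.mem_erase]
    rintro y ⟨c, ⟨hc, -⟩, rfl⟩ ⟨c', -, hy⟩
    have hyi := congrFun hy i
    rw [update_of_ne hii', update_self] at hyi
    exact hc hyi.symm

end HammingGraph

section Syndrome

variable {F W : Type*} [Field F] [AddCommGroup W] [Module F W] {q d : ℕ}

def syndrome (e : Fin q ≃ F) (w : Fin d → W) (x : Fin d → Fin q) : W :=
  ∑ i, e (x i) • w i

variable (e : Fin q ≃ F) (w : Fin d → W)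

lemma syndrome_update (x : Fin d → Fin q) (i : Fin d) (c : Fin q) :
    syndrome e w (update x i c) = syndrome e w x + (e c - e (x i)) • w i := by
  have hterm : ∀ j, e (update x i c j) • w j
      = e (x j) • w j + (Pi.single i ((e c - e (x i)) • w i) : Fin d → W) j := fun j => by
    rcases eq_or_ne j i with rfl | hj
    · simp [sub_smul]
    · simp [hj]
  simp only [syndrome, hterm, Finset.sum_add_distrib, Finset.sum_pi_single', Finset.mem_univ,
    if_true]

lemma sum_erase_eq_sum_units {M : Type*} [AddCommMonoid M] [Fintype F] [DecidableEq F]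
    (a : Fin q) (g : F → M) :
    ∑ c ∈ Finset.univ.erase a, g (e c - e a) = ∑ u : Fˣ, g u := by
  refine Finset.sum_bij' (fun c hc => Units.mk0 (e c - e a)
      (sub_ne_zero.2 (e.injective.ne (Finset.ne_of_mem_erase hc))))
    (fun u _ => e.symm (u + e a)) (fun _ _ => Finset.mem_univ _) ?_ ?_ ?_ ?_
  · intro u _
    simp [Finset.mem_erase, e.symm_apply_eq]
  · intro c _
    simp
  · intro u _
    ext
    simp
  · intro c _
    simp

lemma sum_neighborFinset_comp_syndrome {M : Type*} [AddCommMonoid M] [Fintype F] [DecidableEq F]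
    (φ : W → M) (x : Fin d → Fin q) :
    ∑ y ∈ (hammingGraph q d).neighborFinset x, φ (syndrome e w y)
      = ∑ i, ∑ u : Fˣ, φ (syndrome e w x + (u : F) • w i) := by
  rw [sum_neighborFinset_hammingGraph]
  refine Finset.sum_congr rfl fun i _ => ?_
  simp only [syndrome_update]
  exact sum_erase_eq_sum_units e (x i) fun t => φ (syndrome e w x + t • w i)

end Syndrome

open scoped LinearAlgebra.Projectivization

namespace Projectivization

variable (F W : Type*) [Field F] [AddCommGroup W] [Module F W]

noncomputable def prodUnitsEquivNonZero : ℙ F W × Fˣ ≃ {v : W // v ≠ 0} :=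
  Equiv.ofBijective (fun p => ⟨(p.2 : F) • p.1.rep, smul_ne_zero p.2.ne_zero p.1.rep_nonzero⟩) <| by
    refine ⟨fun ⟨P, u⟩ ⟨P', u'⟩ h => ?_, fun ⟨v, hv⟩ => ?_⟩
    · have hv : (u : F) • P.rep = (u' : F) • P'.rep := congrArg Subtype.val h
      obtain rfl : P = P' := by
        rw [← mk_rep P, ← mk_rep P', mk_eq_mk_iff]
        exact ⟨u⁻¹ * u', by rw [mul_smul, Units.smul_def u', ← hv, ← Units.smul_def, inv_smul_smul]⟩
      rw [Units.ext (smul_left_injective F P.rep_nonzero hv)]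
    · obtain ⟨u, hu⟩ := exists_smul_eq_mk_rep F v hv
      exact ⟨⟨mk F v hv, u⁻¹⟩, Subtype.ext <| by simp [← hu, Units.smul_def, smul_smul]⟩

lemma sum_units_smul_rep_add_zero {M : Type*} [AddCommMonoid M] [Fintype F] [DecidableEq F]
    [Fintype W] [Fintype (ℙ F W)] (ψ : W → M) :
    ∑ P : ℙ F W, ∑ u : Fˣ, ψ ((u : F) • P.rep) + ψ 0 = ∑ v, ψ v := by
  classical
  rw [Fintype.sum_eq_add_sum_subtype_ne ψ 0, add_comm, ← Fintype.sum_prod_type',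
    ← (prodUnitsEquivNonZero F W).sum_comp]
  rfl

end Projectivization

lemma exists_eq_mul_add_one_of_mul_add_one_eq {g d m N : ℕ} (hg : 0 < g)
    (h : g * d + 1 = (N * g + 1) * m) : ∃ r, m = r * g + 1 ∧ d = m * N + r := by
  have hm : 0 < m := Nat.pos_of_ne_zero fun h0 => by simp [h0] at h
  have hNm : N * m ≤ d := Nat.le_of_mul_le_mul_left (by nlinarith) hg
  obtain ⟨r, rfl⟩ := Nat.exists_eq_add_of_le hNm
  exact ⟨r, by nlinarith, by ring⟩

section Construction

variable {F W : Type*} [Field F] [AddCommGroup W] [Module F W] {q d m r : ℕ}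

noncomputable def projectiveColumns (E : (Fin m × ℙ F W) ⊕ Fin r ≃ Fin d) (i : Fin d) : W :=
  Sum.elim (fun p => p.2.rep) 0 (E.symm i)

lemma sum_projectiveColumns [Fintype (ℙ F W)] {M : Type*} [AddCommMonoid M] (E : (Fin m × ℙ F W) ⊕ Fin r ≃ Fin d)
    (T : W → M) :
    ∑ i, T (projectiveColumns E i) = m • ∑ P : ℙ F W, T P.rep + r • T 0 := by
  rw [← E.sum_comp, Fintype.sum_sum_type, Fintype.sum_prod_type]
  simp [projectiveColumns]

variable [Fintype F] [DecidableEq F] [Fintype W] [Fintype (ℙ F W)]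

lemma closedNeighborhood_sum_comp_syndrome_projectiveColumns (hF : Fintype.card F = q)
    (hm : m = r * (q - 1) + 1) (e : Fin q ≃ F) (E : (Fin m × ℙ F W) ⊕ Fin r ≃ Fin d)
    (φ : W → ℕ) (x : Fin d → Fin q) :
    φ (syndrome e (projectiveColumns E) x)
        + ∑ y ∈ (hammingGraph q d).neighborFinset x, φ (syndrome e (projectiveColumns E) y)
      = m * ∑ v, φ v := by
  rw [sum_neighborFinset_comp_syndrome]
  generalize syndrome e (projectiveColumns E) x = s
  have hcols := sum_projectiveColumns E fun w => ∑ u : Fˣ, φ (s + (u : F) • w)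
  have hproj := Projectivization.sum_units_smul_rep_add_zero F W fun v => φ (s + v)
  have hshift : ∑ v, φ (s + v) = ∑ v, φ v := Equiv.sum_comp (Equiv.addLeft s) φ
  rw [hshift] at hproj
  rw [hcols, ← hproj]
  simp only [smul_zero, add_zero, Finset.sum_const, Finset.card_univ, Fintype.card_units, hF,
    smul_eq_mul]
  subst hm
  ring

end Construction

theorem exists_effDom_hammingGraph_of_module {F W : Type*} [Field F] [Fintype F]
    [AddCommGroup W] [Module F W] [Fintype W] {q d m : ℕ} (hF : Fintype.card F = q)
    (h : (q - 1) * d + 1 = Fintype.card W * m) {c : ℕ} (hc : c ≤ Fintype.card W) :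
    ∃ f, EffDom (hammingGraph q d) 1 (m * c) f := by
  classical
  have := Fintype.ofFinite (ℙ F W)
  have hq : 0 < q - 1 := by have := Fintype.one_lt_card (α := F); omega
  have hW : Fintype.card W = Fintype.card (ℙ F W) * (q - 1) + 1 := by
    simpa [Nat.card_eq_fintype_card, hF] using Projectivization.card' F W
  obtain ⟨r, hm, hd⟩ := exists_eq_mul_add_one_of_mul_add_one_eq hq (hW ▸ h)
  let E : (Fin m × ℙ F W) ⊕ Fin r ≃ Fin d := Fintype.equivOfCardEq (by simp [hd])
  let e : Fin q ≃ F := Fintype.equivOfCardEq (by simp [hF])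
  obtain ⟨S, -, hS⟩ := Finset.exists_subset_card_eq (s := Finset.univ) (by simpa using hc)
  let φ : W → ℕ := fun v => if v ∈ S then 1 else 0
  refine ⟨fun x => φ (syndrome e (projectiveColumns E) x), fun _ => ?_, fun x => ?_⟩
  · dsimp only [φ]
    split <;> omega
  · beta_reduce
    rw [closedNeighborhood_sum_comp_syndrome_projectiveColumns hF hm, Finset.sum_boole]
    simp [hS]

theorem stmt17_general (q d a m : ℕ) (hq : IsPrimePow q)
    (h : (q - 1) * d + 1 = q ^ a * m)
    (k : ℕ) (hk2 : k ≤ (q - 1) * d + 1) (hmk : m ∣ k) :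
    ∃ f, EffDom (hammingGraph q d) 1 k f := by
  classical
  obtain ⟨p, n, hp, hn, rfl⟩ := hq
  have := Fact.mk hp.nat_prime
  let F := GaloisField p n
  have : Fintype F := Fintype.ofFinite F
  have hF : Fintype.card F = p ^ n := by
    rw [← Nat.card_eq_fintype_card, GaloisField.card p n hn.ne']
  have hW : Fintype.card (Fin a → F) = (p ^ n) ^ a := by rw [Fintype.card_fun, Fintype.card_fin, hF]
  obtain ⟨c, rfl⟩ := hmk
  have hc : c ≤ Fintype.card (Fin a → F) := by
    have hm : m ≠ 0 := by rintro rfl; simp at h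
    rw [hW]
    refine le_of_mul_le_mul_left ?_ (Nat.pos_of_ne_zero hm)
    rwa [mul_comm m ((p ^ n) ^ a), ← h]
  exact exists_effDom_hammingGraph_of_module hF (hW ▸ h) hc

theorem stmt17 (q d a m : ℕ) (hq : IsPrimePow q)
    (h : (q - 1) * d + 1 = q ^ a * m) (hm : ¬ q ∣ m) (ha : 1 ≤ a)
    (k : ℕ) (hk1 : 1 ≤ k) (hk2 : k ≤ (q - 1) * d + 1) (hmk : m ∣ k) :
    ∃ f, EffDom (hammingGraph q d) 1 k f :=
  stmt17_general q d a m hq h k hk2 hmk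
end

section
/- If X is an m-fold cover of Y and f is an efficient (j,k)-dominating function on X that is constant on every fibre, then the induced function f̌ on V(Y) (giving each vertex the common value of its fibre) is an efficient (j,k)-dominating function on Y; conversely, for any efficient (j,k)-dominating function g on Y, the pullback ĝ on X (assigning g(v) to every vertex of fibre C_v) is an efficient (j,k)-dominating function on X. -/
open SimpleGraph Finset Matrix Polynomial

theorem stmt19 {VX VY : Type*} [Fintype VX] [Fintype VY] [DecidableEq VY]
    (X : SimpleGraph VX) [DecidableRel X.Adj]
    (Y : SimpleGraph VY) [DecidableRel Y.Adj] (F : VX → VY)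
    (h : IsCover X Y F) (m : ℕ)
    (hm : ∀ v : VY, (Finset.univ.filter (fun u => F u = v)).card = m)
    (j k : ℕ) :
    (∀ f : VX → ℕ, EffDom X j k f → (∀ u w, F u = F w → f u = f w) →
      ∀ g : VY → ℕ, (∀ u, g (F u) = f u) → EffDom Y j k g) ∧
    (∀ g : VY → ℕ, EffDom Y j k g → EffDom X j k (g ∘ F)) := by
  obtain ⟨hsurj, hproj, hmatch⟩ := h
  have key : ∀ (g : VY → ℕ) (u : VX),
      ∑ w ∈ X.neighborFinset u, g (F w) = ∑ b ∈ Y.neighborFinset (F u), g b := by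
    intro g u
    refine Finset.sum_bij (fun w _ => F w) ?_ ?_ ?_ (fun _ _ => rfl)
    · intro w hw
      simp only [SimpleGraph.mem_neighborFinset] at hw ⊢
      exact hproj u w hw
    · intro w1 hw1 w2 hw2 heq
      simp only [SimpleGraph.mem_neighborFinset] at hw1 hw2
      obtain ⟨w, -, huniq⟩ := hmatch (F u) (F w1) (hproj u w1 hw1) u rfl
      exact (huniq w1 ⟨rfl, hw1⟩).trans (huniq w2 ⟨heq.symm, hw2⟩).symm
    · intro b hb
      simp only [SimpleGraph.mem_neighborFinset] at hb
      obtain ⟨w, ⟨hFw, hAdj⟩, -⟩ := hmatch (F u) b hb u rfl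
      exact ⟨w, by simpa using hAdj, hFw⟩
  constructor
  · intro f ⟨hfj, hfk⟩ hconst g hg
    constructor
    · intro v
      obtain ⟨u, rfl⟩ := hsurj v
      rw [hg u]; exact hfj u
    · intro v
      obtain ⟨u, rfl⟩ := hsurj v
      have := key g u
      have hfg : ∀ w, g (F w) = f w := hg
      calc g (F u) + ∑ b ∈ Y.neighborFinset (F u), g b
          = f u + ∑ w ∈ X.neighborFinset u, g (F w) := by rw [hg u, key g u]
        _ = f u + ∑ w ∈ X.neighborFinset u, f w := by
            congr 1; exact Finset.sum_congr rfl fun w _ => hg w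
        _ = k := hfk u
  · intro g ⟨hgj, hgk⟩
    refine ⟨fun u => hgj (F u), fun u => ?_⟩
    simp only [Function.comp]
    rw [key g u]
    exact hgk (F u)
end
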